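/- Let γ' : ℝ⁴ → ℝ⁴ be defined by γ'(x,y,z,w) = (-x, -z/√(1+x²/4), y√(1+x²/4), w). With n(x,y,z,w) the 4×4 upper unitriangular matrix [[1, -y, z - xy/2, w],[0, 1, x, z + xy/2],[0, 0, 1, y],[0, 0, 0, 1]], and u, v ∈ SO(2) given by u = (1/√(1+x²/4))[[x/2, 1],[-1, x/2]], v = -u, one has diag(1, u, 1) · n(x,y,z,w) · diag(1, v, 1) = n(γ'(x,y,z,w)). -/
import Mathlib


open Matrix

/-- The map `γ'(x,y,z,w) = (-x, -z/√(1+x²/4), y·√(1+x²/4), w)`. -/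
noncomputable def gammaMap' : ℝ × ℝ × ℝ × ℝ → ℝ × ℝ × ℝ × ℝ :=
  fun p => (-p.1, -p.2.2.1 / Real.sqrt (1 + p.1 ^ 2 / 4),
    p.2.1 * Real.sqrt (1 + p.1 ^ 2 / 4), p.2.2.2)

/-- The 4×4 upper unitriangular matrix `n(x,y,z,w)`. -/
noncomputable def nEl (x y z w : ℝ) : Matrix (Fin 4) (Fin 4) ℝ :=
  !![1, -y, z - x * y / 2, w; 0, 1, x, z + x * y / 2; 0, 0, 1, y; 0, 0, 0, 1]

/-- The rotation matrix `u`. -/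
noncomputable def uRot (x : ℝ) : Matrix (Fin 2) (Fin 2) ℝ :=
  (1 / Real.sqrt (1 + x ^ 2 / 4)) • !![x / 2, 1; -1, x / 2]

/-- `diag(1, u, 1)`, the block diagonal 4×4 matrix with blocks `1`, the 2×2 matrix `u`, and `1`. -/
noncomputable def diagBlock4 (u : Matrix (Fin 2) (Fin 2) ℝ) : Matrix (Fin 4) (Fin 4) ℝ :=
  Matrix.reindex finSumFinEquiv finSumFinEquiv
    (Matrix.fromBlocks (1 : Matrix (Fin 1) (Fin 1) ℝ) 0 0
      (Matrix.reindex finSumFinEquiv finSumFinEquiv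
        (Matrix.fromBlocks u 0 0 (1 : Matrix (Fin 1) (Fin 1) ℝ))))

lemma diagBlock4_eq' (u : Matrix (Fin 2) (Fin 2) ℝ) :
    diagBlock4 u = !![1,0,0,0; 0, u 0 0, u 0 1, 0; 0, u 1 0, u 1 1, 0; 0,0,0,1] := by
  ext i j
  fin_cases i <;> fin_cases j <;> rfl

set_option maxHeartbeats 1000000 in
theorem conj_nEl_eq (x y z w : ℝ) :
    diagBlock4 (uRot x) * nEl x y z w * diagBlock4 (-(uRot x)) =
      nEl (gammaMap' (x, y, z, w)).1 (gammaMap' (x, y, z, w)).2.1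
        (gammaMap' (x, y, z, w)).2.2.1 (gammaMap' (x, y, z, w)).2.2.2 := by
  set s := Real.sqrt (1 + x ^ 2 / 4) with hs_def
  have hpos : (0:ℝ) < 1 + x ^ 2 / 4 := by positivity
  have hs : s ≠ 0 := ne_of_gt (Real.sqrt_pos.mpr hpos)
  have hs2 : s * s = 1 + x ^ 2 / 4 := Real.mul_self_sqrt hpos.le
  have h2 : s ^ 2 = 1 + x ^ 2 / 4 := by rw [sq]; exact hs2
  have h3 : s ^ 3 = (1 + x ^ 2 / 4) * s := by rw [pow_succ, h2]
  have h4 : s ^ 4 = (1 + x ^ 2 / 4) ^ 2 := by rw [show (4:ℕ)=2*2 from rfl, pow_mul, h2]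
  have h5 : s ^ 5 = (1 + x ^ 2 / 4) ^ 2 * s := by rw [pow_succ, h4]
  have h6 : s ^ 6 = (1 + x ^ 2 / 4) ^ 3 := by rw [show (6:ℕ)=2*3 from rfl, pow_mul, h2]
  rw [diagBlock4_eq', diagBlock4_eq']
  have hu : uRot x = (1/s) • !![x / 2, 1; -1, x / 2] := rfl
  rw [hu]
  ext i j
  fin_cases i <;> fin_cases j <;>
    simp [nEl, gammaMap', Matrix.mul_apply, Fin.sum_univ_four, ← hs_def,
      Matrix.smul_apply, Matrix.neg_apply, Matrix.cons_val_zero, Matrix.cons_val_one,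
      Matrix.head_cons, vecHead, vecTail, smul_eq_mul]
  all_goals field_simp
  all_goals ring_nf
  all_goals try simp only [h2, h3, h4, h5, h6]
  all_goals try ring
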